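/- Suppose c* is an optimal pushing strategy. If c*_m = 0 for some index m, then c*_i = 0 for every index i with ρ_i < ρ_m; and if c*_m = 1, then c*_j = 1 for every index j with ρ_j > ρ_m. -/

import Mathlib

/-!
Exchange argument: if `c a > 0`, `c b < 1` and `ρ a < ρ b`, move a small amount `ε` of request
mass from group `a` to group `b`, i.e. lower `c a` by `ε / t a` and raise `c b` by `ε / t b`.
The first factor `∑ t i (1 - c i)` of the gain does not change and stays positive (because
`c b < 1`), while the exponent `∑ t k ρ k c k` grows by `ε (ρ b - ρ a) > 0`, so the gain grows
strictly. Hence an optimal strategy never has such a pair.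
-/

open Finset

variable {ι : Type*}

noncomputable def offloadingGain [Fintype ι] (B : ℝ) (t ρ c : ι → ℝ) : ℝ :=
  (∑ i, t i * (1 - c i)) * (1 - Real.exp (-B * ∑ k, t k * ρ k * c k))

variable [DecidableEq ι]

noncomputable def transfer (t c : ι → ℝ) (a b : ι) (ε : ℝ) : ι → ℝ :=
  c + Pi.single b (ε / t b) - Pi.single a (ε / t a)

section transfer

variable {t c : ι → ℝ} {a b : ι} {ε : ℝ}

lemma transfer_apply_left (hab : a ≠ b) : transfer t c a b ε a = c a - ε / t a := by
  simp [transfer, hab]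

lemma transfer_apply_right (hab : a ≠ b) : transfer t c a b ε b = c b + ε / t b := by
  simp [transfer, hab.symm]

lemma transfer_apply_of_ne {i : ι} (hia : i ≠ a) (hib : i ≠ b) : transfer t c a b ε i = c i := by
  simp [transfer, hia, hib]

lemma transfer_mem_Icc (hab : a ≠ b) (ht : ∀ i, 0 < t i) (hc : c ∈ Set.Icc 0 1) (hε : 0 ≤ ε)
    (hεa : ε ≤ t a * c a) (hεb : ε ≤ t b * (1 - c b)) :
    transfer t c a b ε ∈ Set.Icc 0 1 := by
  have ha : ε / t a ≤ c a := by rw [div_le_iff₀ (ht a)]; linarith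
  have hb : ε / t b ≤ 1 - c b := by rw [div_le_iff₀ (ht b)]; linarith
  have ha₀ : 0 ≤ ε / t a := div_nonneg hε (ht a).le
  have hb₀ : 0 ≤ ε / t b := div_nonneg hε (ht b).le
  have hci (i : ι) : 0 ≤ c i ∧ c i ≤ 1 := ⟨hc.1 i, hc.2 i⟩
  suffices h : ∀ i, 0 ≤ transfer t c a b ε i ∧ transfer t c a b ε i ≤ 1 from
    ⟨fun i => (h i).1, fun i => (h i).2⟩
  intro i
  obtain rfl | hia := eq_or_ne i a
  · rw [transfer_apply_left hab]; constructor <;> linarith [hci i]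
  obtain rfl | hib := eq_or_ne i b
  · rw [transfer_apply_right hab]; constructor <;> linarith [hci i]
  · rw [transfer_apply_of_ne hia hib]; exact hci i

end transfer

variable [Fintype ι]

lemma sum_mul_transfer (w t c : ι → ℝ) (a b : ι) (ε : ℝ) :
    ∑ i, w i * transfer t c a b ε i = ∑ i, w i * c i + w b * (ε / t b) - w a * (ε / t a) := by
  simp [transfer, mul_add, mul_sub, sum_add_distrib, sum_sub_distrib, Pi.single_apply]

lemma offloadingGain_lt_transfer {B : ℝ} {t ρ c : ι → ℝ} {a b : ι} {ε : ℝ} (hB : 0 < B)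
    (ht : ∀ i, 0 < t i) (hc : c ≤ 1) (hcb : c b < 1) (hε : 0 < ε) (hρ : ρ a < ρ b) :
    offloadingGain B t ρ c < offloadingGain B t ρ (transfer t c a b ε) := by
  have hS : 0 < ∑ i, t i * (1 - c i) :=
    sum_pos' (fun i _ => mul_nonneg (ht i).le (sub_nonneg.2 (hc i)))
      ⟨b, mem_univ b, mul_pos (ht b) (sub_pos.2 hcb)⟩
  have hmass : ∑ i, t i * (1 - transfer t c a b ε i) = ∑ i, t i * (1 - c i) := by
    simp only [mul_sub, mul_one, sum_sub_distrib, sum_mul_transfer,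
      mul_div_cancel₀ _ (ht a).ne', mul_div_cancel₀ _ (ht b).ne']
    ring
  have hshare : ∑ k, t k * ρ k * c k < ∑ k, t k * ρ k * transfer t c a b ε k := by
    rw [sum_mul_transfer]
    have : t b * ρ b * (ε / t b) - t a * ρ a * (ε / t a) = ε * (ρ b - ρ a) := by
      field_simp [(ht a).ne', (ht b).ne']
    linarith [mul_pos hε (sub_pos.2 hρ)]
  unfold offloadingGain
  rw [hmass]
  exact mul_lt_mul_of_pos_left (sub_lt_sub_left
    (Real.exp_lt_exp.2 (mul_lt_mul_of_neg_left hshare (neg_neg_of_pos hB))) 1) hS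

lemma le_of_forall_offloadingGain_le {B : ℝ} {t ρ c : ι → ℝ} {a b : ι} (hB : 0 < B)
    (ht : ∀ i, 0 < t i) (hc : c ∈ Set.Icc 0 1)
    (hopt : ∀ d ∈ Set.Icc 0 1, offloadingGain B t ρ d ≤ offloadingGain B t ρ c)
    (hca : 0 < c a) (hcb : c b < 1) : ρ b ≤ ρ a := by
  by_contra! hρ
  have hab : a ≠ b := by rintro rfl; exact lt_irrefl _ hρ
  set ε := min (t a * c a) (t b * (1 - c b))
  have hε : 0 < ε := lt_min (mul_pos (ht a) hca) (mul_pos (ht b) (sub_pos.2 hcb))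
  exact (offloadingGain_lt_transfer hB ht hc.2 hcb hε hρ).not_ge
    (hopt _ (transfer_mem_Icc hab ht hc hε.le (min_le_left _ _) (min_le_right _ _)))

theorem stmt_3_general (M : ℕ) (B : ℝ) (hB : 0 < B)
    (t ρ : Fin M → ℝ) (ht : ∀ i, 0 < t i)
    (c : Fin M → ℝ) (hc : ∀ i, 0 ≤ c i ∧ c i ≤ 1)
    (hopt : ∀ d : Fin M → ℝ, (∀ i, 0 ≤ d i ∧ d i ≤ 1) →
      (∑ i, t i * (1 - d i)) * (1 - Real.exp (-B * ∑ k, t k * ρ k * d k)) ≤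
      (∑ i, t i * (1 - c i)) * (1 - Real.exp (-B * ∑ k, t k * ρ k * c k)))
    (m : Fin M) :
    (c m = 0 → ∀ i : Fin M, ρ i < ρ m → c i = 0) ∧
    (c m = 1 → ∀ j : Fin M, ρ m < ρ j → c j = 1) := by
  have hc' : c ∈ Set.Icc 0 1 := ⟨fun i => (hc i).1, fun i => (hc i).2⟩
  have hopt' : ∀ d ∈ Set.Icc 0 1, offloadingGain B t ρ d ≤ offloadingGain B t ρ c :=
    fun d hd => hopt d fun i => ⟨hd.1 i, hd.2 i⟩
  refine ⟨fun hm i hi => ?_, fun hm j hj => ?_⟩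
  · by_contra hci
    exact (le_of_forall_offloadingGain_le hB ht hc' hopt'
      ((hc i).1.lt_of_ne' hci) (hm ▸ zero_lt_one)).not_gt hi
  · by_contra hcj
    exact (le_of_forall_offloadingGain_le hB ht hc' hopt'
      (hm ▸ zero_lt_one) ((hc j).2.lt_of_ne hcj)).not_gt hj

/-- In an optimal pushing strategy, if `c m = 0` then every group with
smaller sharing probability also gets 0; if `c m = 1` then every group with larger
sharing probability also gets 1. -/
theorem stmt_3 (M : ℕ) (hM : 1 ≤ M) (B : ℝ) (hB : 0 < B)
    (t ρ : Fin M → ℝ) (ht : ∀ i, 0 < t i) (hρ : ∀ i, 0 < ρ i ∧ ρ i ≤ 1)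
    (c : Fin M → ℝ) (hc : ∀ i, 0 ≤ c i ∧ c i ≤ 1)
    (hopt : ∀ d : Fin M → ℝ, (∀ i, 0 ≤ d i ∧ d i ≤ 1) →
      (∑ i, t i * (1 - d i)) * (1 - Real.exp (-B * ∑ k, t k * ρ k * d k)) ≤
      (∑ i, t i * (1 - c i)) * (1 - Real.exp (-B * ∑ k, t k * ρ k * c k)))
    (m : Fin M) :
    (c m = 0 → ∀ i : Fin M, ρ i < ρ m → c i = 0) ∧
    (c m = 1 → ∀ j : Fin M, ρ m < ρ j → c j = 1) :=
  stmt_3_general M B hB t ρ ht c hc hopt m
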